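/- Let A = (a₁,…,a_m) be a deterministic row-vector of boolean series over a structured alphabet W and 1 ≤ j₀ ≤ m. Define A' = ∇*_{j₀}(A) by a'_j = (a_{j₀})*·a_j for j ≠ j₀ and a'_{j₀} = ∅, where * is Kleene star of series. Then A' is a deterministic row-vector and ‖A'‖ ≤ ‖A‖. -/
import Mathlib


/-- Left-quotient (residual) of a boolean series (language) by a word. -/
def lq {W : Type*} (S : Language W) (u : List W) : Language W := {w | u ++ w ∈ S}

/-- Componentwise left-quotient of a row-vector of series. -/
def lqVec {W : Type*} {n : ℕ} (S : Fin n → Language W) (u : List W) :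
    Fin n → Language W := fun j => lq (S j) u

/-- A row-vector of series is left-deterministic over the structured alphabet `(W, r)`:
it is the zero vector, or a unit vector, or all words occurring in any component
start with `r`-equivalent letters. -/
def LeftDetVec {W : Type*} (r : W → W → Prop) {n : ℕ} (S : Fin n → Language W) : Prop :=
  (∀ j, S j = 0) ∨
  (∃ j0, S j0 = 1 ∧ ∀ j, j ≠ j0 → S j = 0) ∨
  (∀ j j' w w', w ∈ S j → w' ∈ S j' →
    ∃ (a a' : W) (t t' : List W), w = a :: t ∧ w' = a' :: t' ∧ r a a')

/-- A row-vector is deterministic iff all its componentwise left-quotients are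
left-deterministic. -/
def DetVec {W : Type*} (r : W → W → Prop) {n : ℕ} (S : Fin n → Language W) : Prop :=
  ∀ u : List W, LeftDetVec r (lqVec S u)

/-- A matrix of series is deterministic iff each of its rows is. -/
def DetMat {W : Type*} (r : W → W → Prop) {n m : ℕ}
    (M : Fin n → Fin m → Language W) : Prop :=
  ∀ i, DetVec r (M i)

/-- Matrix product of matrices of boolean series. -/
def matMul {W : Type*} {n m s : ℕ} (A : Fin n → Fin m → Language W)
    (B : Fin m → Fin s → Language W) : Fin n → Fin s → Language W :=
  fun i j => ∑ k, A i k * B k j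

/-- Row-vector times matrix. -/
def vecMulMat {W : Type*} {m s : ℕ} (A : Fin m → Language W)
    (B : Fin m → Fin s → Language W) : Fin s → Language W :=
  fun j => ∑ k, A k * B k j

/-- Set of row-residuals of a matrix of series. -/
def rowResiduals {W : Type*} {n m : ℕ} (M : Fin n → Fin m → Language W) :
    Set (Fin m → Language W) :=
  {T | ∃ (i : Fin n) (u : List W), T = lqVec (M i) u}

/-- The norm of a matrix: the (extended) number of its row-residuals. -/
noncomputable def normMat {W : Type*} {n m : ℕ} (M : Fin n → Fin m → Language W) : ℕ∞ :=
  (rowResiduals M).encard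

/-- Set of residuals of a row-vector of series. -/
def residualsVec {W : Type*} {n : ℕ} (S : Fin n → Language W) :
    Set (Fin n → Language W) :=
  {T | ∃ u : List W, T = lqVec S u}

/-- The norm of a row-vector: the (extended) number of its residuals. -/
noncomputable def normVec {W : Type*} {n : ℕ} (S : Fin n → Language W) : ℕ∞ :=
  (residualsVec S).encard

/-- The operation `∇*_{j₀}(A)` on row-vectors:
`a'_j = (a_{j₀})* · a_j` for `j ≠ j₀` and `a'_{j₀} = ∅`. -/
def nablaStar {W : Type*} {m : ℕ} (A : Fin m → Language W) (j0 : Fin m) :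
    Fin m → Language W :=
  fun j => if j = j0 then 0 else KStar.kstar (A j0) * A j

section Aux

variable {W : Type*}

lemma mem_lq {S : Language W} {u w : List W} : w ∈ lq S u ↔ u ++ w ∈ S := Iff.rfl

lemma lq_nil (S : Language W) : lq S [] = S := rfl

lemma lq_append (S : Language W) (u v : List W) : lq S (u ++ v) = lq (lq S u) v := by
  ext w
  rw [mem_lq, mem_lq, mem_lq, List.append_assoc]

lemma lq_zero (u : List W) : lq (0 : Language W) u = 0 := by
  ext w
  exact ⟨fun h => (Language.notMem_zero _ h).elim, fun h => (Language.notMem_zero _ h).elim⟩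

lemma lq_add (X Y : Language W) (u : List W) : lq (X + Y) u = lq X u + lq Y u := by
  ext w
  rw [mem_lq, Language.mem_add, Language.mem_add, mem_lq, mem_lq]

lemma lq_mul_cons_not {X : Language W} (h : [] ∉ X) (Y : Language W) (a : W) :
    lq (X * Y) [a] = lq X [a] * Y := by
  ext w
  rw [mem_lq, Language.mem_mul, Language.mem_mul]
  constructor
  · rintro ⟨x, hx, y, hy, hxy⟩
    cases x with
    | nil => exact absurd hx h
    | cons c x' =>
      simp only [List.cons_append, List.singleton_append, List.cons.injEq] at hxy
      obtain ⟨rfl, rfl⟩ := hxy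
      exact ⟨x', hx, y, hy, rfl⟩
  · rintro ⟨x, hx, y, hy, rfl⟩
    exact ⟨a :: x, hx, y, hy, rfl⟩

lemma lq_mul_cons_mem {X : Language W} (h : [] ∈ X) (Y : Language W) (a : W) :
    lq (X * Y) [a] = lq X [a] * Y + lq Y [a] := by
  ext w
  rw [mem_lq, Language.mem_add, Language.mem_mul, Language.mem_mul]
  constructor
  · rintro ⟨x, hx, y, hy, hxy⟩
    cases x with
    | nil =>
      right
      rw [mem_lq, ← show [] ++ y = [a] ++ w from hxy]
      exact hy
    | cons c x' =>
      simp only [List.cons_append, List.singleton_append, List.cons.injEq] at hxy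
      obtain ⟨rfl, rfl⟩ := hxy
      exact Or.inl ⟨x', hx, y, hy, rfl⟩
  · rintro (⟨x, hx, y, hy, rfl⟩ | hw)
    · exact ⟨a :: x, hx, y, hy, rfl⟩
    · exact ⟨[], h, a :: w, hw, rfl⟩

lemma lq_kstar_cons {B : Language W} (hB : [] ∉ B) (a : W) :
    lq (KStar.kstar B) [a] = lq B [a] * KStar.kstar B := by
  ext w
  rw [mem_lq, Language.mem_mul]
  constructor
  · intro h
    rw [Language.mem_kstar] at h
    obtain ⟨L, hL, hmem⟩ := h
    cases L with
    | nil => simp at hL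
    | cons y L' =>
      cases y with
      | nil => exact absurd (hmem [] (by simp)) hB
      | cons c y' =>
        simp only [List.flatten_cons, List.cons_append, List.singleton_append,
          List.cons.injEq] at hL
        obtain ⟨rfl, rfl⟩ := hL
        exact ⟨y', hmem _ (by simp), L'.flatten,
          Language.join_mem_kstar (fun z hz => hmem z (by simp [hz])), rfl⟩
  · rintro ⟨x, hx, s, hs, rfl⟩
    rw [Language.mem_kstar] at hs
    rw [mem_lq] at hx
    obtain ⟨L, rfl, hm⟩ := hs
    rw [Language.mem_kstar]
    refine ⟨(a :: x) :: L, by simp, ?_⟩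
    intro y hy
    rcases List.mem_cons.mp hy with rfl | hy
    · exact hx
    · exact hm y hy

/-- The key operator `Φ`: the residuals of `∇*_{j₀}(A)` are exactly images under `Φ`
of residuals of `A`. -/
def PhiOp {m : ℕ} (A : Fin m → Language W) (j0 : Fin m) (C : Fin m → Language W) :
    Fin m → Language W :=
  fun j => if j = j0 then 0 else C j0 * (KStar.kstar (A j0) * A j) + C j

variable (r : W → W → Prop) {m : ℕ} (A : Fin m → Language W) (j0 : Fin m)

lemma unit_of_eps (hA : DetVec r A) {z : List W} (h : [] ∈ lq (A j0) z) :
    lqVec A z = fun j => if j = j0 then (1 : Language W) else 0 := by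
  rcases hA z with h0 | ⟨j1, h1, hrest⟩ | h3
  · have hh : lq (A j0) z = 0 := h0 j0
    rw [hh] at h
    exact absurd h (Language.notMem_zero _)
  · have hj : j1 = j0 := by
      by_contra hne
      have hh : lq (A j0) z = 0 := hrest j0 (fun hh => hne hh.symm)
      rw [hh] at h
      exact absurd h (Language.notMem_zero _)
    subst hj
    funext j
    by_cases hj : j = j1
    · subst hj
      simpa using (h1 : lqVec A z j = 1)
    · simpa [hj] using (hrest j hj : lqVec A z j = 0)
  · obtain ⟨a, a', t, t', he, _, _⟩ :=
      h3 j0 j0 [] [] (h : [] ∈ lqVec A z j0) (h : [] ∈ lqVec A z j0)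
    exact absurd he (by simp)

lemma phi_step (hA : DetVec r A) (hB : [] ∉ A j0) (z : List W) (a : W) :
    ∃ z', (fun j => lq (PhiOp A j0 (lqVec A z) j) [a]) = PhiOp A j0 (lqVec A z') := by
  by_cases h : [] ∈ lq (A j0) z
  · refine ⟨[a], ?_⟩
    have hC := unit_of_eps r A j0 hA h
    funext j
    by_cases hj : j = j0
    · simp [PhiOp, hj, lq_zero]
    · rw [hC]
      show lq (if j = j0 then 0 else
          (if j0 = j0 then (1 : Language W) else 0) * (KStar.kstar (A j0) * A j)
            + (if j = j0 then 1 else 0)) [a]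
        = PhiOp A j0 (lqVec A [a]) j
      rw [if_neg hj, if_neg hj, if_pos rfl, one_mul, add_zero,
        lq_mul_cons_mem (Language.nil_mem_kstar _) _ a, lq_kstar_cons hB a, mul_assoc]
      show _ = if j = j0 then (0 : Language W) else
          lq (A j0) [a] * (KStar.kstar (A j0) * A j) + lq (A j) [a]
      rw [if_neg hj]
  · refine ⟨z ++ [a], ?_⟩
    funext j
    by_cases hj : j = j0
    · simp [PhiOp, hj, lq_zero]
    · show lq (if j = j0 then 0 else
          lq (A j0) z * (KStar.kstar (A j0) * A j) + lq (A j) z) [a]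
        = if j = j0 then (0 : Language W) else
          lq (A j0) (z ++ [a]) * (KStar.kstar (A j0) * A j) + lq (A j) (z ++ [a])
      rw [if_neg hj, if_neg hj, lq_add, lq_mul_cons_not h _ a, lq_append, lq_append]

lemma nabla_eq_phi : nablaStar A j0 = PhiOp A j0 A := by
  funext j
  by_cases hj : j = j0
  · simp [nablaStar, PhiOp, hj]
  · show (if j = j0 then (0 : Language W) else KStar.kstar (A j0) * A j)
      = if j = j0 then 0 else A j0 * (KStar.kstar (A j0) * A j) + A j
    rw [if_neg hj, if_neg hj]
    conv_lhs => rw [← Language.one_add_self_mul_kstar_eq_kstar (A j0)]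
    rw [add_mul, one_mul, mul_assoc, add_comm]

lemma phi_inv (hA : DetVec r A) (hB : [] ∉ A j0) (u : List W) :
    ∃ z, lqVec (nablaStar A j0) u = PhiOp A j0 (lqVec A z) := by
  induction u using List.reverseRecOn with
  | nil => exact ⟨[], nabla_eq_phi A j0⟩
  | append_singleton u a ih =>
    obtain ⟨z, hz⟩ := ih
    obtain ⟨z', h'⟩ := phi_step r A j0 hA hB z a
    refine ⟨z', ?_⟩
    rw [← h']
    funext j
    have hzj : lq (nablaStar A j0 j) u = PhiOp A j0 (lqVec A z) j := congrFun hz j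
    show lq (nablaStar A j0 j) (u ++ [a]) = lq (PhiOp A j0 (lqVec A z) j) [a]
    rw [lq_append, hzj]

lemma third_of_heads {C D : Fin m → Language W}
    (hC : ∀ j j' w w', w ∈ C j → w' ∈ C j' →
      ∃ (a a' : W) (t t' : List W), w = a :: t ∧ w' = a' :: t' ∧ r a a')
    (h : ∀ j w, w ∈ D j → ∃ a t, w = a :: t ∧ ∃ j₂ t₂, (a :: t₂) ∈ C j₂) :
    ∀ j j' w w', w ∈ D j → w' ∈ D j' →
      ∃ (a a' : W) (t t' : List W), w = a :: t ∧ w' = a' :: t' ∧ r a a' := by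
  intro j j' w w' hw hw'
  obtain ⟨a, t, rfl, j₂, t₂, h₂⟩ := h j w hw
  obtain ⟨a', t', rfl, j₂', t₂', h₂'⟩ := h j' w' hw'
  obtain ⟨b, b', s, s', e1, e2, hbb⟩ := hC j₂ j₂' _ _ h₂ h₂'
  injection e1 with hab _
  injection e2 with hab' _
  cases hab; cases hab'
  exact ⟨_, _, t, t', rfl, rfl, hbb⟩

lemma third_head {C : Fin m → Language W}
    (hC : ∀ j j' w w', w ∈ C j → w' ∈ C j' →
      ∃ (a a' : W) (t t' : List W), w = a :: t ∧ w' = a' :: t' ∧ r a a')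
    {j : Fin m} {w : List W} (hw : w ∈ C j) : ∃ a t, w = a :: t := by
  obtain ⟨a, a', t, t', he, _, _⟩ := hC j j w w hw hw
  exact ⟨a, t, he⟩

lemma head_kstar_mul {B X : Language W}
    (hX : ∀ w ∈ X, ∃ (a : W) (t : List W), w = a :: t) {w : List W}
    (hw : w ∈ KStar.kstar B * X) :
    ∃ a t, w = a :: t ∧ ((∃ t₂, a :: t₂ ∈ B) ∨ (∃ t₂, a :: t₂ ∈ X)) := by
  rw [Language.mem_mul] at hw
  obtain ⟨p, hp, s, hs, rfl⟩ := hw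
  rw [Language.mem_kstar_iff_exists_nonempty] at hp
  obtain ⟨L, rfl, hL⟩ := hp
  cases L with
  | nil =>
    obtain ⟨a, t, rfl⟩ := hX s hs
    exact ⟨a, t, by simp, Or.inr ⟨t, hs⟩⟩
  | cons y L' =>
    obtain ⟨hyB, hyne⟩ := hL y (by simp)
    cases y with
    | nil => exact absurd rfl hyne
    | cons c y' =>
      exact ⟨c, y' ++ (L'.flatten ++ s), by simp, Or.inl ⟨y', hyB⟩⟩

lemma detPhi (hA : DetVec r A) (hB : [] ∉ A j0) (z : List W) :
    LeftDetVec r (PhiOp A j0 (lqVec A z)) := by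
  rcases hA z with h0 | ⟨j1, h1, hrest⟩ | h3
  · left
    intro j
    by_cases hj : j = j0 <;> simp [PhiOp, hj, h0 j0, h0 j]
  · by_cases hj1 : j1 = j0
    · rw [hj1] at h1 hrest
      have hD : PhiOp A j0 (lqVec A z)
          = fun j => if j = j0 then 0 else KStar.kstar (A j0) * A j := by
        funext j
        by_cases hj : j = j0
        · simp [PhiOp, hj]
        · simp [PhiOp, hj, h1, hrest j hj]
      rw [hD]
      have hA0 := hA []
      have hE : lqVec A [] = A := rfl
      rw [hE] at hA0
      rcases hA0 with g0 | ⟨l, g1, grest⟩ | g3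
      · left
        intro j
        by_cases hj : j = j0 <;> simp [hj, g0 j]
      · by_cases hl : l = j0
        · subst hl
          exact absurd (by rw [g1]; exact Language.nil_mem_one) hB
        · right; left
          refine ⟨l, ?_, ?_⟩
          · simp [if_neg hl, grest j0 (fun hh => hl hh.symm), g1]
          · intro j hjl
            by_cases hj : j = j0
            · simp [hj]
            · simp [hj, grest j hjl]
      · right; right
        apply third_of_heads r g3
        intro j w hw
        by_cases hj : j = j0
        · rw [if_pos hj] at hw
          exact absurd hw (Language.notMem_zero _)
        · rw [if_neg hj] at hw
          obtain ⟨a, t, rfl, hsrc⟩ :=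
            head_kstar_mul (fun w hw => third_head r g3 hw) hw
          rcases hsrc with ⟨t₂, h₂⟩ | ⟨t₂, h₂⟩
          · exact ⟨a, t, rfl, j0, t₂, h₂⟩
          · exact ⟨a, t, rfl, j, t₂, h₂⟩
    · have hPC : PhiOp A j0 (lqVec A z) = lqVec A z := by
        funext j
        by_cases hj : j = j0
        · have : lqVec A z j0 = 0 := hrest j0 (fun hh => hj1 hh.symm)
          simp [PhiOp, hj, this.symm]
        · have : lqVec A z j0 = 0 := hrest j0 (fun hh => hj1 hh.symm)
          simp [PhiOp, hj, this]
      rw [hPC]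
      exact hA z
  · right; right
    apply third_of_heads r h3
    intro j w hw
    by_cases hj : j = j0
    · rw [show PhiOp A j0 (lqVec A z) j = 0 from if_pos hj] at hw
      exact absurd hw (Language.notMem_zero _)
    · rw [show PhiOp A j0 (lqVec A z) j
          = lqVec A z j0 * (KStar.kstar (A j0) * A j) + lqVec A z j from if_neg hj] at hw
      rcases (Language.mem_add _ _ _).mp hw with hw1 | hw2
      · rw [Language.mem_mul] at hw1
        obtain ⟨x, hx, y, hy, rfl⟩ := hw1
        obtain ⟨a, t, rfl⟩ := third_head r h3 hx
        exact ⟨a, t ++ y, by simp, j0, t, hx⟩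
      · obtain ⟨a, t, rfl⟩ := third_head r h3 hw2
        exact ⟨a, t, rfl, j, t, hw2⟩

end Aux

/-- If `A` is a deterministic row-vector over a structured alphabet and `j₀` an index,
then `∇*_{j₀}(A)` is deterministic and `‖∇*_{j₀}(A)‖ ≤ ‖A‖`. -/
theorem nablaStar_det_and_norm {W : Type*} (r : W → W → Prop) (hr : Equivalence r)
    {m : ℕ} (A : Fin m → Language W) (j0 : Fin m) (hA : DetVec r A) :
    DetVec r (nablaStar A j0) ∧ normVec (nablaStar A j0) ≤ normVec A := by
  by_cases hB : [] ∈ A j0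
  · -- degenerate case: `A` is the unit vector at `j0`, so `∇*` is zero.
    have hu := unit_of_eps r A j0 hA (z := []) hB
    have hA0 : ∀ j, j ≠ j0 → A j = 0 := by
      intro j hj
      have := congrFun hu j
      simpa [lqVec, lq_nil, if_neg hj] using this
    have hz : nablaStar A j0 = fun _ => (0 : Language W) := by
      funext j
      by_cases hj : j = j0
      · simp [nablaStar, hj]
      · simp [nablaStar, hj, hA0 j hj]
    rw [hz]
    constructor
    · intro u
      left
      intro j
      exact lq_zero u
    · have hres : residualsVec (fun _ : Fin m => (0 : Language W))
          = {fun _ => (0 : Language W)} := by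
        ext T
        constructor
        · rintro ⟨u, rfl⟩
          funext j
          exact lq_zero u
        · rintro rfl
          exact ⟨[], (funext fun j => (lq_zero ([] : List W)) : _).symm⟩
      rw [normVec, hres, Set.encard_singleton, normVec]
      exact Set.one_le_encard_iff_nonempty.mpr ⟨lqVec A [], [], rfl⟩
  · constructor
    · intro u
      obtain ⟨z, hz⟩ := phi_inv r A j0 hA hB u
      rw [hz]
      exact detPhi r A j0 hA hB z
    · have hsub : residualsVec (nablaStar A j0) ⊆ (PhiOp A j0) '' (residualsVec A) := by
        rintro T ⟨u, rfl⟩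
        obtain ⟨z, hz⟩ := phi_inv r A j0 hA hB u
        exact ⟨lqVec A z, ⟨z, rfl⟩, hz.symm⟩
      calc normVec (nablaStar A j0) ≤ ((PhiOp A j0) '' residualsVec A).encard :=
            Set.encard_le_encard hsub
        _ ≤ normVec A := Set.encard_image_le _ _
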